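/- Every contiguous subsequence (infix) of a valid token sequence is itself a valid token sequence; in particular, every prefix and every suffix of a valid token sequence is valid. -/

import Mathlib

/-!
Formalization of a BPE tokenizer with an ordered merge list.

* `σ` is the (finite) byte alphabet, `τ` is the (finite) vocabulary of tokens.
* `base` embeds each byte as a distinct base token.
* `dec` decodes a single token to a byte string; it is extended to token
  sequences by concatenation (`decodeSeq`).
* `merges` is the ordered merge list; each merge `(l, r, n)` replaces an
  adjacent pair `(l, r)` by the single token `n`, and satisfies
  `dec n = dec l ++ dec r`.
* `encode` turns a byte string into its base tokens and then, processing the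
  merges in order, repeatedly replaces the leftmost adjacent occurrence of
  `(l, r)` by `n` until no occurrence remains, before moving to the next merge.
-/

structure BPE (σ τ : Type*) where
  base : σ → τ
  dec : τ → List σ
  merges : List (τ × τ × τ)
  base_inj : Function.Injective base
  dec_base : ∀ b, dec (base b) = [b]
  dec_merge : ∀ m ∈ merges, dec m.2.2 = dec m.1 ++ dec m.2.1

namespace BPE

variable {σ τ : Type*} [DecidableEq τ]

/-- Decode a token sequence by concatenating the decodings of its tokens. -/
def decodeSeq (B : BPE σ τ) (T : List τ) : List σ := (T.map B.dec).flatten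

/-- Replace the leftmost adjacent occurrence of `(l, r)` by `n`, if any,
also returning the starting byte position of the replaced pair. -/
def replaceLeftmost (B : BPE σ τ) (l r n : τ) : List τ → Option (ℕ × List τ)
  | [] => none
  | [_] => none
  | t :: u :: rest =>
      if t = l ∧ u = r then some (0, n :: rest)
      else (B.replaceLeftmost l r n (u :: rest)).map
        (fun p => (p.1 + (B.dec t).length, t :: p.2))

/-- Repeatedly replace the leftmost adjacent occurrence of `(l, r)` by `n`
until no occurrence remains (the fuel, taken to be the length of the list,
suffices since every replacement shortens the list).  Also returns the list
of byte positions at which replacements were performed, in order. -/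
def runMerge (B : BPE σ τ) (l r n : τ) : ℕ → List τ → List τ × List ℕ
  | 0, T => (T, [])
  | fuel + 1, T =>
    match B.replaceLeftmost l r n T with
    | none => (T, [])
    | some (p, T') =>
      let q := B.runMerge l r n fuel T'
      (q.1, p :: q.2)

/-- Process an (indexed) list of merges in order, starting from token sequence
`T`; returns the final token sequence together with the ordered list of merge
applications performed, each recorded as a pair
(index of the merge in the merge list, starting byte position). -/
def encodeRunAux (B : BPE σ τ) : List (ℕ × τ × τ × τ) → List τ → List τ × List (ℕ × ℕ)
  | [], T => (T, [])
  | (i, l, r, n) :: ms, T =>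
    let q := B.runMerge l r n T.length T
    let q' := B.encodeRunAux ms q.1
    (q'.1, q.2.map (fun p => (i, p)) ++ q'.2)

/-- The full run of the BPE encoder on a byte string `S`: the final token
sequence together with the ordered list of merge applications performed. -/
def encodeRun (B : BPE σ τ) (S : List σ) : List τ × List (ℕ × ℕ) :=
  B.encodeRunAux (B.merges.zipIdx.map Prod.swap) (S.map B.base)

/-- BPE encoding of a byte string. -/
def encode (B : BPE σ τ) (S : List σ) : List τ := (B.encodeRun S).1

/-- The ordered list of merge applications (merge index, starting byte
position) performed during the run of `encode` on `S`. -/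
def encodeApps (B : BPE σ τ) (S : List σ) : List (ℕ × ℕ) := (B.encodeRun S).2

/-- A token sequence is *valid* if it is the canonical encoding of the byte
string it decodes to. -/
def Valid (B : BPE σ τ) (T : List τ) : Prop := B.encode (B.decodeSeq T) = T

/-- The merge list is in *normal form*:
(i) each token is produced by at most one merge;
(ii) every token `t` satisfies `encode (dec t) = [t]`;
(iii) every merge occurs later in the merge list than the merges producing
each of its two input tokens. -/
def NormalForm (B : BPE σ τ) : Prop :=
  (∀ i j (hi : i < B.merges.length) (hj : j < B.merges.length),
      (B.merges[i]'hi).2.2 = (B.merges[j]'hj).2.2 → i = j) ∧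
  (∀ t : τ, B.encode (B.dec t) = [t]) ∧
  (∀ i j (hi : i < B.merges.length) (hj : j < B.merges.length),
      (B.merges[i]'hi).2.2 = (B.merges[j]'hj).1 ∨
        (B.merges[i]'hi).2.2 = (B.merges[j]'hj).2.1 → i < j)

/-- The merge application `app = (t, p)` *crosses* byte position `c` if the
token it creates (the output of merge `t`, starting at byte position `p`)
has a byte span properly containing `c`. -/
def AppCrosses (B : BPE σ τ) (app : ℕ × ℕ) (c : ℕ) : Prop :=
  ∃ h : app.1 < B.merges.length,
    app.2 < c ∧ c < app.2 + (B.dec (B.merges[app.1]'h).2.2).length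

/-- Some merge applied during the run of `encode` on `S` crosses position `c`. -/
def MergeCrossesInRun (B : BPE σ τ) (S : List σ) (c : ℕ) : Prop :=
  ∃ app ∈ B.encodeApps S, B.AppCrosses app c

/-- The token sequence `U` contains a token whose byte span properly
contains position `c`. -/
def TokenCrosses (B : BPE σ τ) (U : List τ) (c : ℕ) : Prop :=
  ∃ k, k < U.length ∧
    (B.decodeSeq (U.take k)).length < c ∧ c < (B.decodeSeq (U.take (k + 1))).length

end BPE
namespace BPE

variable {σ τ : Type*} [DecidableEq τ]

/-- The *Valid Covering Tree* of a byte string `P`: the set of all nonempty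
token sequences `T = [t₁, …, tₙ]` such that (1) `P` is a prefix of
`decode T`, (2) `decode [t₁, …, t_{n-1}]` is a prefix of `P`, and
(3) `T` is valid. -/
def VCT (B : BPE σ τ) (P : List σ) : Set (List τ) :=
  {T | T ≠ [] ∧ P <+: B.decodeSeq T ∧ B.decodeSeq T.dropLast <+: P ∧ B.Valid T}

/-- The maximal prefix of a token sequence whose total decoded length is at
most `k`, i.e. the tokens whose byte spans end at or before position `k`
(together with their spans, which are determined by the preceding tokens). -/
def spanPrefix (B : BPE σ τ) (k : ℕ) : List τ → List τ
  | [] => []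
  | t :: T =>
      if (B.dec t).length ≤ k then t :: B.spanPrefix (k - (B.dec t).length) T
      else []

/-- `L₀` is a *lookahead bound* for the tokenizer if whenever two byte strings
agree on their first `k + L₀` bytes, the tokens of their encodings whose byte
spans end at or before position `k` coincide (with identical spans). -/
def LookaheadBound (B : BPE σ τ) (L₀ : ℕ) : Prop :=
  ∀ (x x' : List σ) (k : ℕ), x.take (k + L₀) = x'.take (k + L₀) →
    B.spanPrefix k (B.encode x) = B.spanPrefix k (B.encode x')

/-- `U'` is the minimal covering prefix of `U` with respect to `P`: the
shortest prefix of `U` whose decoding has `P` as a prefix. -/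
def IsMinCover (B : BPE σ τ) (P : List σ) (U U' : List τ) : Prop :=
  U' <+: U ∧ P <+: B.decodeSeq U' ∧
    ∀ U'' : List τ, U'' <+: U → P <+: B.decodeSeq U'' → U'.length ≤ U''.length

/-- The pair `(l, r)` occurs adjacently in `T`. -/
def PairAdj (l r : τ) (T : List τ) : Prop := ∃ A C, T = A ++ l :: r :: C

/-- The merge application `a = (t, i)` (merge index `t`, starting byte
position `i` of the left token) is applicable to the token sequence `T`. -/
def Applicable (B : BPE σ τ) (a : ℕ × ℕ) (T : List τ) : Prop :=
  ∃ h : a.1 < B.merges.length, ∃ A C : List τ,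
    T = A ++ (B.merges[a.1]'h).1 :: (B.merges[a.1]'h).2.1 :: C ∧
      (B.decodeSeq A).length = a.2

/-- `T'` is obtained from `T` by performing the merge application `a = (t, i)`:
the input pair of merge `t`, occurring adjacently in `T` with the left token
starting at byte position `i`, is replaced by the output token of merge `t`. -/
def ApplyApp (B : BPE σ τ) (a : ℕ × ℕ) (T T' : List τ) : Prop :=
  ∃ h : a.1 < B.merges.length, ∃ A C : List τ,
    T = A ++ (B.merges[a.1]'h).1 :: (B.merges[a.1]'h).2.1 :: C ∧
      (B.decodeSeq A).length = a.2 ∧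
      T' = A ++ (B.merges[a.1]'h).2.2 :: C

/-- Lexicographic order on merge applications `(t, i)`. -/
def appLE (a a' : ℕ × ℕ) : Prop :=
  a.1 < a'.1 ∨ (a.1 = a'.1 ∧ a.2 ≤ a'.2)

/-- `GreedyChain B T₀ apps T` holds when the sequence of merge applications
`apps` leads from token sequence `T₀` to token sequence `T`, and each applied
application is lexicographically least among those applicable to the current
token sequence. -/
inductive GreedyChain (B : BPE σ τ) : List τ → List (ℕ × ℕ) → List τ → Prop
  | nil (T : List τ) : GreedyChain B T [] T
  | cons {T T' Tf : List τ} {a : ℕ × ℕ} {apps : List (ℕ × ℕ)} :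
      B.ApplyApp a T T' →
      (∀ a', B.Applicable a' T → appLE a a') →
      GreedyChain B T' apps Tf →
      GreedyChain B T (a :: apps) Tf

end BPE

/-!
During a run of the encoder, token boundaries are only ever erased, never created. So if the
encoding of `S₁ ++ S₂` has a boundary after `S₁`, no merge of the run straddled it, and since
each merge is applied leftmost-first until exhaustion, the run acts on `S₁` and on `S₂`
independently: `encode (S₁ ++ S₂) = encode S₁ ++ encode S₂`. For a valid `T₁ ++ T₂` this gives
`T₁ ++ T₂ = encode (decode T₁) ++ encode (decode T₂)`, and as every token of an encoding decodes
to a nonempty string, the two factorizations agree.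
-/

theorem List.prefix_append_cons_iff {α : Type*} {P A C : List α} {x : α} :
    P <+: A ++ x :: C ↔ P <+: A ∨ ∃ Q, P = A ++ x :: Q ∧ Q <+: C := by
  constructor
  · intro hP
    rcases List.prefix_or_prefix_of_prefix hP (List.prefix_append A (x :: C)) with h | ⟨D, rfl⟩
    · exact Or.inl h
    · rcases List.prefix_cons_iff.1 ((List.prefix_append_right_inj A).1 hP) with rfl | ⟨Q, rfl, hQ⟩
      · exact Or.inl (by simp)
      · exact Or.inr ⟨Q, rfl, hQ⟩
  · rintro (h | ⟨Q, rfl, hQ⟩)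
    · exact h.trans (List.prefix_append A (x :: C))
    · simpa using hQ

namespace BPE

section

variable {σ τ : Type*} (B : BPE σ τ)

@[simp]
lemma decodeSeq_nil : B.decodeSeq [] = [] := rfl

@[simp]
lemma decodeSeq_cons (t : τ) (T : List τ) :
    B.decodeSeq (t :: T) = B.dec t ++ B.decodeSeq T := by
  simp [decodeSeq]

@[simp]
lemma decodeSeq_append (T U : List τ) :
    B.decodeSeq (T ++ U) = B.decodeSeq T ++ B.decodeSeq U := by
  simp [decodeSeq]

@[simp]
lemma decodeSeq_map_base (S : List σ) : B.decodeSeq (S.map B.base) = S := by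
  induction S with
  | nil => rfl
  | cons b S ih => simp [B.dec_base, ih]

lemma eq_of_prefix_of_decodeSeq_length_eq {P T : List τ}
    (hT : ∀ t ∈ T, 0 < (B.dec t).length) (hP : P <+: T)
    (h : (B.decodeSeq P).length = (B.decodeSeq T).length) : P = T := by
  obtain ⟨D, rfl⟩ := hP
  cases D with
  | nil => simp
  | cons t D =>
    have := hT t (by simp)
    simp at h
    simp [h.1] at this

lemma prefix_eq_of_decodeSeq_length_eq {W P P' : List τ}
    (hW : ∀ t ∈ W, 0 < (B.dec t).length) (hP : P <+: W) (hP' : P' <+: W)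
    (h : (B.decodeSeq P).length = (B.decodeSeq P').length) : P = P' := by
  rcases List.prefix_or_prefix_of_prefix hP hP' with hle | hle
  · exact B.eq_of_prefix_of_decodeSeq_length_eq (fun t ht => hW t (hP'.subset ht)) hle h
  · exact (B.eq_of_prefix_of_decodeSeq_length_eq (fun t ht => hW t (hP.subset ht)) hle h.symm).symm

def IsBoundary (c : ℕ) (T : List τ) : Prop :=
  ∃ P, P <+: T ∧ (B.decodeSeq P).length = c

lemma not_isBoundary_of_lt_of_lt {A C : List τ} {x : τ} {c : ℕ}
    (hA : (B.decodeSeq A).length < c) (hx : c < (B.decodeSeq A).length + (B.dec x).length) :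
    ¬ B.IsBoundary c (A ++ x :: C) := by
  rintro ⟨P, hP, rfl⟩
  rcases List.prefix_append_cons_iff.1 hP with ⟨D, rfl⟩ | ⟨Q, rfl, -⟩
  · simp at hA
  · simp at hx

def MergeStep (T U : List τ) : Prop :=
  ∃ m ∈ B.merges, ∃ A C, T = A ++ m.1 :: m.2.1 :: C ∧ U = A ++ m.2.2 :: C

abbrev MergeSteps : List τ → List τ → Prop := Relation.ReflTransGen B.MergeStep

variable {B}

lemma MergeStep.decodeSeq_eq {T U : List τ} (h : B.MergeStep T U) :
    B.decodeSeq U = B.decodeSeq T := by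
  obtain ⟨m, hm, A, C, rfl, rfl⟩ := h
  simp [B.dec_merge m hm]

lemma MergeStep.dec_pos {T U : List τ} (h : B.MergeStep T U)
    (hT : ∀ t ∈ T, 0 < (B.dec t).length) : ∀ t ∈ U, 0 < (B.dec t).length := by
  obtain ⟨m, hm, A, C, rfl, rfl⟩ := h
  simp only [List.mem_append, List.mem_cons] at hT ⊢
  rintro t (ht | rfl | ht)
  · exact hT t (Or.inl ht)
  · have := hT m.1 (Or.inr (Or.inl rfl))
    rw [B.dec_merge m hm, List.length_append]
    omega
  · exact hT t (Or.inr (Or.inr (Or.inr ht)))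

lemma MergeStep.isBoundary {T U : List τ} {c : ℕ} (h : B.MergeStep T U)
    (hc : B.IsBoundary c U) : B.IsBoundary c T := by
  obtain ⟨m, hm, A, C, rfl, rfl⟩ := h
  obtain ⟨P, hP, rfl⟩ := hc
  rcases List.prefix_append_cons_iff.1 hP with hP | ⟨Q, rfl, hQ⟩
  · exact ⟨P, hP.trans (List.prefix_append _ _), rfl⟩
  · refine ⟨A ++ m.1 :: m.2.1 :: Q, by simpa using hQ, ?_⟩
    simp [B.dec_merge m hm]

lemma MergeSteps.decodeSeq_eq {T U : List τ} (h : B.MergeSteps T U) :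
    B.decodeSeq U = B.decodeSeq T := by
  induction h with
  | refl => rfl
  | tail _ hs ih => rw [hs.decodeSeq_eq, ih]

lemma MergeSteps.dec_pos {T U : List τ} (h : B.MergeSteps T U)
    (hT : ∀ t ∈ T, 0 < (B.dec t).length) : ∀ t ∈ U, 0 < (B.dec t).length := by
  induction h with
  | refl => exact hT
  | tail _ hs ih => exact hs.dec_pos ih

lemma MergeSteps.isBoundary {T U : List τ} {c : ℕ} (h : B.MergeSteps T U)
    (hc : B.IsBoundary c U) : B.IsBoundary c T := by
  induction h with
  | refl => exact hc
  | tail _ hs ih => exact ih (hs.isBoundary hc)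

end

section

variable {σ τ : Type*} [DecidableEq τ] (B : BPE σ τ) (l r n : τ)

def mergeLeftmost (T : List τ) : Option (List τ) :=
  (B.replaceLeftmost l r n T).map Prod.snd

@[simp]
lemma mergeLeftmost_nil : B.mergeLeftmost l r n [] = none := rfl

lemma mergeLeftmost_cons (t : τ) (T : List τ) :
    B.mergeLeftmost l r n (t :: T) =
      if t = l ∧ T.head? = some r then some (n :: T.tail)
      else (B.mergeLeftmost l r n T).map (t :: ·) := by
  rcases T with _ | ⟨u, T⟩
  · simp [mergeLeftmost, replaceLeftmost]
  · simp only [mergeLeftmost, replaceLeftmost, List.head?_cons, Option.some.injEq, List.tail_cons]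
    split <;> simp [Option.map_map, Function.comp_def]

variable {B l r n}

lemma exists_eq_of_mergeLeftmost_eq_some {T U : List τ} (h : B.mergeLeftmost l r n T = some U) :
    ∃ A C, T = A ++ l :: r :: C ∧ U = A ++ n :: C := by
  induction T generalizing U with
  | nil => simp at h
  | cons t T ih =>
    rw [mergeLeftmost_cons] at h
    split_ifs at h with ht
    · obtain ⟨rfl, hT⟩ := ht
      obtain ⟨C, rfl⟩ := List.head?_eq_some_iff.1 hT
      exact ⟨[], C, rfl, (Option.some.inj h).symm⟩
    · obtain ⟨U', hU', rfl⟩ := Option.map_eq_some_iff.1 h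
      obtain ⟨A, C, rfl, rfl⟩ := ih hU'
      exact ⟨t :: A, C, rfl, rfl⟩

lemma length_lt_of_mergeLeftmost_eq_some {T U : List τ} (h : B.mergeLeftmost l r n T = some U) :
    U.length < T.length := by
  obtain ⟨A, C, rfl, rfl⟩ := exists_eq_of_mergeLeftmost_eq_some h
  simp

lemma mergeStep_of_mergeLeftmost_eq_some (hm : (l, r, n) ∈ B.merges) {T U : List τ}
    (h : B.mergeLeftmost l r n T = some U) : B.MergeStep T U :=
  ⟨(l, r, n), hm, exists_eq_of_mergeLeftmost_eq_some h⟩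

lemma mergeLeftmost_append_eq_none {L R : List τ} (h : B.mergeLeftmost l r n (L ++ R) = none) :
    B.mergeLeftmost l r n L = none ∧ B.mergeLeftmost l r n R = none := by
  induction L with
  | nil => exact ⟨rfl, h⟩
  | cons t L ih =>
    rw [List.cons_append, mergeLeftmost_cons] at h
    split_ifs at h with ht
    obtain ⟨hL, hR⟩ := ih (Option.map_eq_none_iff.1 h)
    refine ⟨?_, hR⟩
    rw [mergeLeftmost_cons, hL, Option.map_none, ite_eq_right_iff]
    rintro ⟨rfl, hr⟩
    exact (ht ⟨rfl, by simp [List.head?_append, hr]⟩).elim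

lemma mergeLeftmost_append_eq_some {L R U : List τ}
    (h : B.mergeLeftmost l r n (L ++ R) = some U) :
    (∃ L', B.mergeLeftmost l r n L = some L' ∧ U = L' ++ R) ∨
      (∃ A C, L = A ++ [l] ∧ R = r :: C ∧ U = A ++ n :: C) ∨
      (∃ R', B.mergeLeftmost l r n L = none ∧ B.mergeLeftmost l r n R = some R' ∧
        U = L ++ R') := by
  induction L generalizing U with
  | nil => exact Or.inr (Or.inr ⟨U, rfl, h, rfl⟩)
  | cons t L ih =>
    rw [List.cons_append, mergeLeftmost_cons] at h
    split_ifs at h with ht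
    · obtain ⟨rfl, hr⟩ := ht
      cases Option.some.inj h
      rcases L with _ | ⟨v, L⟩
      · obtain ⟨C, rfl⟩ := List.head?_eq_some_iff.1 hr
        exact Or.inr (Or.inl ⟨[], C, rfl, rfl, rfl⟩)
      · cases Option.some.inj hr
        exact Or.inl ⟨n :: L, by simp [mergeLeftmost_cons], rfl⟩
    · have hne : ¬(t = l ∧ L.head? = some r) := fun ⟨htl, hr⟩ ↦
        ht ⟨htl, by simp [List.head?_append, hr]⟩
      obtain ⟨U', hU', rfl⟩ := Option.map_eq_some_iff.1 h
      rcases ih hU' with ⟨L', hL, rfl⟩ | ⟨A, C, rfl, rfl, rfl⟩ | ⟨R', hL, hR, rfl⟩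
      · exact Or.inl ⟨t :: L', by rw [mergeLeftmost_cons, if_neg hne, hL]; rfl, rfl⟩
      · exact Or.inr (Or.inl ⟨t :: A, C, rfl, rfl, rfl⟩)
      · exact Or.inr (Or.inr ⟨R', by rw [mergeLeftmost_cons, if_neg hne, hL]; rfl, hR, rfl⟩)

variable (B l r n)

def mergeAll (T : List τ) : List τ :=
  match h : B.mergeLeftmost l r n T with
  | none => T
  | some U =>
    have := length_lt_of_mergeLeftmost_eq_some h
    mergeAll U
termination_by T.length

variable {B l r n}

lemma mergeAll_of_eq_none {T : List τ} (h : B.mergeLeftmost l r n T = none) :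
    B.mergeAll l r n T = T := by
  rw [mergeAll]
  split <;> simp_all

lemma mergeAll_of_eq_some {T U : List τ} (h : B.mergeLeftmost l r n T = some U) :
    B.mergeAll l r n T = B.mergeAll l r n U := by
  rw [mergeAll]
  split <;> simp_all

lemma mergeSteps_mergeAll (hm : (l, r, n) ∈ B.merges) (T : List τ) :
    B.MergeSteps T (B.mergeAll l r n T) := by
  induction T using mergeAll.induct B l r n with
  | case1 T h => rw [mergeAll_of_eq_none h]
  | case2 T U h _ ih =>
    rw [mergeAll_of_eq_some h]
    exact .head (mergeStep_of_mergeLeftmost_eq_some hm h) ih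

theorem mergeAll_append (hm : (l, r, n) ∈ B.merges) {L R : List τ}
    (hL : ∀ t ∈ L, 0 < (B.dec t).length) (hR : ∀ t ∈ R, 0 < (B.dec t).length)
    (hb : B.IsBoundary (B.decodeSeq L).length (B.mergeAll l r n (L ++ R))) :
    B.mergeAll l r n (L ++ R) = B.mergeAll l r n L ++ B.mergeAll l r n R := by
  rcases h : B.mergeLeftmost l r n (L ++ R) with _ | U
  · obtain ⟨hL', hR'⟩ := mergeLeftmost_append_eq_none h
    rw [mergeAll_of_eq_none h, mergeAll_of_eq_none hL', mergeAll_of_eq_none hR']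
  rw [mergeAll_of_eq_some h] at hb ⊢
  rcases mergeLeftmost_append_eq_some h with
    ⟨L', hL', rfl⟩ | ⟨A, C, rfl, rfl, rfl⟩ | ⟨R', hL', hR', rfl⟩
  · have hstep := mergeStep_of_mergeLeftmost_eq_some hm hL'
    have := length_lt_of_mergeLeftmost_eq_some hL'
    rw [mergeAll_of_eq_some hL',
      mergeAll_append hm (hstep.dec_pos hL) hR (by rwa [hstep.decodeSeq_eq])]
  · -- the leftmost merge straddles position `|decode L|`, which no later merge can restore
    exfalso
    have hl := hL l (by simp)
    have hr := hR r (by simp)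
    refine B.not_isBoundary_of_lt_of_lt (x := n) ?_ ?_ ((mergeSteps_mergeAll hm _).isBoundary hb)
    · simp
      omega
    · simp [B.dec_merge _ hm]
      omega
  · have hstep := mergeStep_of_mergeLeftmost_eq_some hm hR'
    have := length_lt_of_mergeLeftmost_eq_some hR'
    rw [mergeAll_of_eq_none hL', mergeAll_of_eq_some hR',
      mergeAll_append hm hL (hstep.dec_pos hR) hb, mergeAll_of_eq_none hL']
termination_by L.length + R.length

variable (B) in
def applyMerges : List (τ × τ × τ) → List τ → List τ
  | [], T => T
  | (l, r, n) :: ms, T => applyMerges ms (B.mergeAll l r n T)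

lemma mergeSteps_applyMerges {ms : List (τ × τ × τ)} (hms : ms ⊆ B.merges) (T : List τ) :
    B.MergeSteps T (B.applyMerges ms T) := by
  induction ms generalizing T with
  | nil => exact .refl
  | cons m ms ih =>
    obtain ⟨l, r, n⟩ := m
    have hm : (l, r, n) ∈ B.merges := hms (List.mem_cons_self ..)
    exact (mergeSteps_mergeAll hm T).trans (ih (fun _ h ↦ hms (List.mem_cons_of_mem _ h)) _)

theorem applyMerges_append {ms : List (τ × τ × τ)} (hms : ms ⊆ B.merges) {L R : List τ}
    (hL : ∀ t ∈ L, 0 < (B.dec t).length) (hR : ∀ t ∈ R, 0 < (B.dec t).length)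
    (hb : B.IsBoundary (B.decodeSeq L).length (B.applyMerges ms (L ++ R))) :
    B.applyMerges ms (L ++ R) = B.applyMerges ms L ++ B.applyMerges ms R := by
  induction ms generalizing L R with
  | nil => rfl
  | cons m ms ih =>
    obtain ⟨l, r, n⟩ := m
    have hm : (l, r, n) ∈ B.merges := hms (List.mem_cons_self ..)
    have hms' : ms ⊆ B.merges := fun _ h ↦ hms (List.mem_cons_of_mem _ h)
    have hsplit : B.mergeAll l r n (L ++ R) = B.mergeAll l r n L ++ B.mergeAll l r n R :=
      mergeAll_append hm hL hR ((mergeSteps_applyMerges hms' _).isBoundary hb)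
    have hstepsL := mergeSteps_mergeAll hm L
    simp only [applyMerges] at hb ⊢
    rw [hsplit] at hb ⊢
    exact ih hms' (hstepsL.dec_pos hL) ((mergeSteps_mergeAll hm R).dec_pos hR)
      (by rwa [hstepsL.decodeSeq_eq])

lemma runMerge_fst {fuel : ℕ} {T : List τ} (hT : T.length ≤ fuel) :
    (B.runMerge l r n fuel T).1 = B.mergeAll l r n T := by
  induction fuel generalizing T with
  | zero =>
    obtain rfl : T = [] := List.eq_nil_of_length_eq_zero (Nat.le_zero.1 hT)
    exact (mergeAll_of_eq_none rfl).symm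
  | succ fuel ih =>
    rcases h : B.replaceLeftmost l r n T with _ | ⟨p, U⟩
    · rw [runMerge, h, mergeAll_of_eq_none (by simp [mergeLeftmost, h])]
    · have hU : B.mergeLeftmost l r n T = some U := by simp [mergeLeftmost, h]
      have := length_lt_of_mergeLeftmost_eq_some hU
      rw [runMerge, h, mergeAll_of_eq_some hU, ← ih (by omega)]

lemma encodeRunAux_fst (ms : List (ℕ × τ × τ × τ)) (T : List τ) :
    (B.encodeRunAux ms T).1 = B.applyMerges (ms.map Prod.snd) T := by
  induction ms generalizing T with
  | nil => rfl
  | cons m ms ih =>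
    obtain ⟨i, l, r, n⟩ := m
    simp only [encodeRunAux, List.map_cons, applyMerges, ih, runMerge_fst le_rfl]

lemma encode_eq_applyMerges (S : List σ) :
    B.encode S = B.applyMerges B.merges (S.map B.base) := by
  rw [encode, encodeRun, encodeRunAux_fst, List.map_map]
  congr
  exact List.zipIdx_map_fst 0 B.merges

lemma mergeSteps_encode (S : List σ) : B.MergeSteps (S.map B.base) (B.encode S) :=
  B.encode_eq_applyMerges S ▸ mergeSteps_applyMerges (fun _ h ↦ h) _

@[simp]
lemma decodeSeq_encode (S : List σ) : B.decodeSeq (B.encode S) = S := by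
  rw [(B.mergeSteps_encode S).decodeSeq_eq, decodeSeq_map_base]

lemma dec_pos_of_mem_encode (S : List σ) : ∀ t ∈ B.encode S, 0 < (B.dec t).length :=
  (B.mergeSteps_encode S).dec_pos (by simp [B.dec_base])

theorem encode_append {S₁ S₂ : List σ}
    (hb : B.IsBoundary S₁.length (B.encode (S₁ ++ S₂))) :
    B.encode (S₁ ++ S₂) = B.encode S₁ ++ B.encode S₂ := by
  have hpos : ∀ S : List σ, ∀ t ∈ S.map B.base, 0 < (B.dec t).length := by simp [B.dec_base]
  simp only [encode_eq_applyMerges, List.map_append] at hb ⊢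
  exact applyMerges_append (fun _ h ↦ h) (hpos S₁) (hpos S₂) (by simpa using hb)

theorem Valid.of_append {T₁ T₂ : List τ} (hV : B.Valid (T₁ ++ T₂)) : B.Valid T₁ ∧ B.Valid T₂ := by
  unfold Valid at hV ⊢
  rw [decodeSeq_append] at hV
  have hb : B.IsBoundary (B.decodeSeq T₁).length (B.encode (B.decodeSeq T₁ ++ B.decodeSeq T₂)) :=
    hV ▸ ⟨T₁, List.prefix_append _ _, rfl⟩
  have hsplit := B.encode_append hb
  rw [hV] at hsplit
  have h₁ : B.encode (B.decodeSeq T₁) = T₁ :=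
    B.prefix_eq_of_decodeSeq_length_eq (hV ▸ B.dec_pos_of_mem_encode _)
      (hsplit ▸ List.prefix_append _ _) (List.prefix_append _ _) (by simp)
  rw [h₁] at hsplit
  exact ⟨h₁, (List.append_cancel_left hsplit).symm⟩

theorem Valid.of_infix {T T' : List τ} (h : T' <:+: T) (hV : B.Valid T) : B.Valid T' := by
  obtain ⟨A, C, rfl⟩ := h
  rw [List.append_assoc] at hV
  exact (hV.of_append.2).of_append.1

end

end BPE

theorem BPE.valid_of_infix_general {σ τ : Type*} [DecidableEq τ]
    (B : BPE σ τ) :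
    (∀ T T' : List τ, T' <:+: T → B.Valid T → B.Valid T') ∧
      (∀ T T' : List τ, T' <+: T → B.Valid T → B.Valid T') ∧
      (∀ T T' : List τ, T' <:+ T → B.Valid T → B.Valid T') :=
  ⟨fun _ _ h hV ↦ hV.of_infix h, fun _ _ h hV ↦ hV.of_infix h.isInfix,
    fun _ _ h hV ↦ hV.of_infix h.isInfix⟩

/-- Every contiguous subsequence (infix) of a valid token sequence is itself a
valid token sequence; in particular, every prefix and every suffix of a valid
token sequence is valid. -/
theorem BPE.valid_of_infix {σ τ : Type*} [DecidableEq τ]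
    (B : BPE σ τ) (hNF : B.NormalForm) :
    (∀ T T' : List τ, T' <:+: T → B.Valid T → B.Valid T') ∧
      (∀ T T' : List τ, T' <+: T → B.Valid T → B.Valid T') ∧
      (∀ T T' : List τ, T' <:+ T → B.Valid T → B.Valid T') :=
  BPE.valid_of_infix_general B
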